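/- Define g_n by g_0 = 1, g_1 = 1/(1-q) (case a = -1: g_1 = -1/(q-1)) via g_n(q^{2n} - 1) = -q g_{n-2} - (1+q) g_{n-1} with the sign conventions giving (1 - q^{2n}) g_n = q g_{n-2} + (1+q) g_{n-1}. Then g_n > 0 for all n, and f_n := g_n q^{n^2} defines an entire function f(1/z) = \sum_n f_n z^n with positive Taylor coefficients. -/

import Mathlib

/-- The coefficients of case `a = -1` of Proposition 4.1:
`g_0 = 1`, `g_1 = 1/(1-q)`, and `(1 - q^{2n}) g_n = q g_{n-2} + (1+q) g_{n-1}`. -/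
noncomputable def gSeq (q : ℝ) : ℕ → ℝ
  | 0 => 1
  | 1 => 1 / (1 - q)
  | (n + 2) => (q * gSeq q n + (1 + q) * gSeq q (n + 1)) / (1 - q ^ (2 * (n + 2)))

/-! The recurrence divides a positive combination of the two previous terms by
`1 - q^{2n} ∈ [1 - q², 1)`, so `g_n > 0` and `g_n ≤ C^{n}` with `C = 3 / (1 - q²)`.
Geometric growth is then crushed by the Gaussian factor `q^{n²}`:
`C^n q^{n²} |z|^n = (C |z| qⁿ)ⁿ ≤ 2⁻ⁿ` for large `n`. -/

theorem summable_pow_mul_pow_sq {q : ℝ} (hq0 : 0 ≤ q) (hq1 : q < 1) (r : ℝ) :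
    Summable fun n : ℕ => r ^ n * q ^ (n ^ 2) := by
  have hsmall : ∀ᶠ n : ℕ in Filter.atTop, |r| * q ^ n ≤ 1 / 2 := by
    have := (tendsto_pow_atTop_nhds_zero_of_lt_one hq0 hq1).const_mul |r|
    rw [mul_zero] at this
    exact this.eventually (ge_mem_nhds (by norm_num))
  refine Summable.of_norm_bounded_eventually summable_geometric_two ?_
  rw [Nat.cofinite_eq_atTop]
  filter_upwards [hsmall] with n hn
  calc ‖r ^ n * q ^ (n ^ 2)‖ = (|r| * q ^ n) ^ n := by
        rw [Real.norm_eq_abs, abs_mul, abs_pow, abs_pow, abs_of_nonneg hq0, mul_pow, ← pow_mul,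
          sq]
    _ ≤ (1 / 2) ^ n := pow_le_pow_left₀ (by positivity) hn n

section
variable {q : ℝ}

theorem gSeq_pos (hq0 : 0 ≤ q) (hq1 : q < 1) (n : ℕ) : 0 < gSeq q n := by
  induction n using gSeq.induct with
  | case1 => simp [gSeq]
  | case2 => simpa [gSeq] using hq1
  | case3 n ih₀ ih₁ =>
    rw [gSeq]
    have := sub_pos.2 (pow_lt_one₀ hq0 hq1 (show 2 * (n + 2) ≠ 0 by omega))
    positivity

theorem gSeq_le_pow (hq0 : 0 ≤ q) (hq1 : q < 1) (n : ℕ) :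
    gSeq q n ≤ (3 / (1 - q ^ 2)) ^ n := by
  set C := 3 / (1 - q ^ 2)
  have hq2 : 0 < 1 - q ^ 2 := sub_pos.2 (pow_lt_one₀ hq0 hq1 two_ne_zero)
  have hC : 1 ≤ C := by rw [le_div_iff₀ hq2]; nlinarith
  induction n using gSeq.induct with
  | case1 => simp [gSeq]
  | case2 =>
    rw [gSeq, pow_one, div_le_div_iff₀ (by linarith) hq2]
    nlinarith
  | case3 n ih₀ ih₁ =>
    have hden : 1 - q ^ 2 ≤ 1 - q ^ (2 * (n + 2)) := by
      linarith [pow_le_pow_of_le_one hq0 hq1.le (show 2 ≤ 2 * (n + 2) by omega)]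
    have hnum : q * gSeq q n + (1 + q) * gSeq q (n + 1) ≤ 3 * C ^ (n + 1) := by
      have hmono : C ^ n ≤ C ^ (n + 1) := pow_le_pow_right₀ hC n.le_succ
      have hCn : 0 ≤ C ^ (n + 1) := by positivity
      nlinarith [mul_le_mul_of_nonneg_left (ih₀.trans hmono) hq0,
        mul_le_mul_of_nonneg_left ih₁ (by linarith : (0 : ℝ) ≤ 1 + q)]
    have hpos : 0 ≤ q * gSeq q n + (1 + q) * gSeq q (n + 1) := by
      have := gSeq_pos hq0 hq1 n; have := gSeq_pos hq0 hq1 (n + 1); positivity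
    calc gSeq q (n + 2)
        ≤ (q * gSeq q n + (1 + q) * gSeq q (n + 1)) / (1 - q ^ 2) :=
          div_le_div_of_nonneg_left hpos hq2 hden
      _ ≤ 3 * C ^ (n + 1) / (1 - q ^ 2) := by gcongr
      _ = C ^ (n + 2) := by rw [pow_succ C (n + 1)]; simp only [C]; field_simp

end

/-- every `g_n > 0`, and `f_n := g_n q^{n²}` defines an entire function
`f(1/z) = ∑_n f_n zⁿ` (the series converges for every complex `z`) with positive
Taylor coefficients. -/
theorem gSeq_pos_and_entire (q : ℝ) (hq0 : 0 < q) (hq1 : q < 1) :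
    (∀ n : ℕ, 0 < gSeq q n) ∧
    (∀ n : ℕ, 0 < gSeq q n * q ^ (n ^ 2)) ∧
    ∀ z : ℂ, Summable (fun n : ℕ => ((gSeq q n * q ^ (n ^ 2) : ℝ) : ℂ) * z ^ n) := by
  have hpos := gSeq_pos hq0.le hq1
  refine ⟨hpos, fun n => mul_pos (hpos n) (pow_pos hq0 _), fun z => ?_⟩
  refine Summable.of_norm_bounded
    (summable_pow_mul_pow_sq hq0.le hq1 (3 / (1 - q ^ 2) * ‖z‖)) fun n => ?_
  rw [norm_mul, norm_pow, Complex.norm_real, Real.norm_of_nonneg (by positivity [hpos n]),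
    mul_pow, mul_right_comm]
  gcongr
  exact gSeq_le_pow hq0.le hq1 n
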